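/- arXiv:1503.04249 — 6 statements merged into one kernel-verified Lean document; each statement's English description precedes it below -/
import Mathlib

section
/- For the odd-rule CA with neighborhood F = x + 1/y + x/y (Odd-rule 013), |F^{2^n - 1}| = 3^n for all n ≥ 0. -/
/-- The ring `R = GF(2)[x, x⁻¹, y, y⁻¹]`, with `x^i y^j` the element
`AddMonoidAlgebra.single (i, j) 1`. -/
abbrev R2 := AddMonoidAlgebra (ZMod 2) (ℤ × ℤ)

/-- The monomial `x^i y^j` of `R`. -/
noncomputable def mon (i j : ℤ) : R2 := AddMonoidAlgebra.single (i, j) 1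

/-!
In characteristic 2 the Frobenius map gives `F ^ 2^n = x^(2^n) + y^(-2^n) + x^(2^n) y^(-2^n)`,
so `F ^ (2^(n+1) - 1) = F ^ (2^n - 1) * F ^ 2^n` is the sum of three translates of
`F ^ (2^n - 1)`. The support of `F ^ (2^n - 1)` lies in the box `[0, 2^n) × (-2^n, 0]`, and the
three translates move it into three distinct quadrants of the box `[0, 2^(n+1)) × (-2^(n+1), 0]`.
Hence no cancellation occurs, the support triples in size and stays in the doubled box.
-/

namespace OddRule013

instance : CharP R2 2 := charP_of_injective_algebraMap' (ZMod 2) 2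

/-- `nbhd N = F(x^N, y^N)`, so that `F = nbhd 1`. -/
noncomputable def nbhd (N : ℤ) : R2 := mon N 0 + mon 0 (-N) + mon N (-N)

lemma mon_pow (i j : ℤ) (k : ℕ) : mon i j ^ k = mon (k * i) (k * j) := by
  simp [mon, AddMonoidAlgebra.single_pow]

lemma nbhd_one_pow_two_pow (n : ℕ) : nbhd 1 ^ 2 ^ n = nbhd (2 ^ n) := by
  simp only [nbhd, add_pow_char_pow _ _ 2 n, mon_pow]
  push_cast
  ring_nf

def box (N a b : ℤ) : Set (ℤ × ℤ) := Set.Ico a (a + N) ×ˢ Set.Ioc (b - N) b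

lemma support_mul_mon_subset_box {P : R2} {N : ℤ} (hP : ↑P.coeff.support ⊆ box N 0 0)
    (a b : ℤ) : ↑(P * mon a b).coeff.support ⊆ box N a b := by
  rw [mon, AddMonoidAlgebra.support_coeff_mul_single P 1 (by simp), Finset.coe_map]
  rintro _ ⟨q, hq, rfl⟩
  obtain ⟨⟨h₁, h₂⟩, h₃, h₄⟩ := hP hq
  simp only [box, addRightEmbedding_apply, Set.mem_prod, Set.mem_Ico, Set.mem_Ioc,
    Prod.fst_add, Prod.snd_add]
  omega

lemma card_support_mul_mon (P : R2) (a b : ℤ) :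
    (P * mon a b).coeff.support.card = P.coeff.support.card := by
  rw [mon, AddMonoidAlgebra.support_coeff_mul_single P 1 (by simp), Finset.card_map]

lemma disjoint_support_of_subset_box {P Q : R2} {N a b a' b' : ℤ}
    (hP : ↑P.coeff.support ⊆ box N a b) (hQ : ↑Q.coeff.support ⊆ box N a' b')
    (h : a + N ≤ a' ∨ a' + N ≤ a ∨ b' ≤ b - N ∨ b ≤ b' - N) :
    Disjoint P.coeff.support Q.coeff.support := by
  rw [← Finset.disjoint_coe]
  refine Set.disjoint_of_subset hP hQ (Set.disjoint_left.mpr ?_)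
  rintro p ⟨⟨h₁, h₂⟩, h₃, h₄⟩ ⟨⟨h₁', h₂'⟩, h₃', h₄'⟩
  omega

lemma card_support_add {P Q : R2} (h : Disjoint P.coeff.support Q.coeff.support) :
    (P + Q).coeff.support.card = P.coeff.support.card + Q.coeff.support.card := by
  rw [AddMonoidAlgebra.coeff_add, Finsupp.support_add_eq h, Finset.card_union_of_disjoint h]

lemma support_mul_nbhd_subset_box {P : R2} {N : ℤ} (hP : ↑P.coeff.support ⊆ box N 0 0) :
    ↑(P * nbhd N).coeff.support ⊆ box (2 * N) 0 0 := by
  intro p hp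
  rw [nbhd, mul_add, mul_add, Finset.mem_coe, AddMonoidAlgebra.coeff_add,
    AddMonoidAlgebra.coeff_add] at hp
  have hbox : p ∈ box N N 0 ∨ p ∈ box N 0 (-N) ∨ p ∈ box N N (-N) := by
    rcases Finset.mem_union.mp (Finsupp.support_add hp) with hp | hxy
    · rcases Finset.mem_union.mp (Finsupp.support_add hp) with hx | hy
      · exact .inl (support_mul_mon_subset_box hP N 0 hx)
      · exact .inr (.inl (support_mul_mon_subset_box hP 0 (-N) hy))
    · exact .inr (.inr (support_mul_mon_subset_box hP N (-N) hxy))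
  simp only [box, Set.mem_prod, Set.mem_Ico, Set.mem_Ioc] at hbox ⊢
  omega

lemma card_support_mul_nbhd {P : R2} {N : ℤ} (hP : ↑P.coeff.support ⊆ box N 0 0) :
    (P * nbhd N).coeff.support.card = 3 * P.coeff.support.card := by
  have hx := support_mul_mon_subset_box hP N 0
  have hy := support_mul_mon_subset_box hP 0 (-N)
  have hxy := support_mul_mon_subset_box hP N (-N)
  have hx_hy := disjoint_support_of_subset_box hx hy (by omega)
  have hx_hy_hxy : Disjoint (P * mon N 0 + P * mon 0 (-N)).coeff.support
      (P * mon N (-N)).coeff.support := by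
    rw [AddMonoidAlgebra.coeff_add]
    exact Disjoint.mono_left Finsupp.support_add <| Finset.disjoint_union_left.mpr
      ⟨disjoint_support_of_subset_box hx hxy (by omega),
        disjoint_support_of_subset_box hy hxy (by omega)⟩
  rw [nbhd, mul_add, mul_add, card_support_add hx_hy_hxy, card_support_add hx_hy,
    card_support_mul_mon, card_support_mul_mon, card_support_mul_mon]
  ring

lemma pow_two_pow_sub_one_eq (n : ℕ) :
    nbhd 1 ^ (2 ^ (n + 1) - 1) = nbhd 1 ^ (2 ^ n - 1) * nbhd (2 ^ n) := by
  rw [← nbhd_one_pow_two_pow, ← pow_add]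
  congr 1
  have := Nat.one_le_two_pow (n := n)
  rw [pow_succ]
  omega

lemma support_pow_two_pow_sub_one_subset_box (n : ℕ) :
    ↑(nbhd 1 ^ (2 ^ n - 1)).coeff.support ⊆ box (2 ^ n) 0 0 := by
  induction n with
  | zero => simp [AddMonoidAlgebra.one_def, box]
  | succ n ih =>
    rw [pow_two_pow_sub_one_eq, pow_succ']
    exact support_mul_nbhd_subset_box ih

lemma card_support_pow_two_pow_sub_one (n : ℕ) :
    (nbhd 1 ^ (2 ^ n - 1)).coeff.support.card = 3 ^ n := by
  induction n with
  | zero => simp [AddMonoidAlgebra.one_def]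
  | succ n ih =>
    rw [pow_two_pow_sub_one_eq,
      card_support_mul_nbhd (support_pow_two_pow_sub_one_subset_box n), ih, pow_succ']

end OddRule013

/-- For the odd-rule CA with neighborhood `F = x + 1/y + x/y` (Odd-rule 013),
`|F^(2^n - 1)| = 3^n` for all `n ≥ 0`. -/
theorem oddRule013_growth (n : ℕ) :
    ((mon 1 0 + mon 0 (-1) + mon 1 (-1)) ^ (2 ^ n - 1)).coeff.support.card = 3 ^ n :=
  OddRule013.card_support_pow_two_pow_sub_one n
end

section
/- For F = x + 1/y + x/y in GF(2)[x,x^{-1},y,y^{-1}], |F^n| = 3^{s(n)} for all n ≥ 0, where s(n) is the number of 1s in the binary expansion of n. -/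
open Finset
open scoped Pointwise

namespace AddMonoidAlgebra

theorem pow_prime_eq_mapDomain_nsmul {p : ℕ} [Fact p.Prime] {G : Type*} [AddCommMonoid G]
    (f : AddMonoidAlgebra (ZMod p) G) : f ^ p = mapDomain (p • ·) f := by
  have : CharP (AddMonoidAlgebra (ZMod p) G) p := charP_of_injective_algebraMap' (ZMod p) p
  have hfrob : frobenius (AddMonoidAlgebra (ZMod p) G) p =
      mapDomainRingHom (ZMod p) (nsmulAddMonoidHom p) := by
    refine ringHom_ext (fun r => ?_) (fun m => ?_) <;> simp [frobenius_def, ZMod.pow_card]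
  exact congr($hfrob f)

theorem card_support_mul_of_injOn {k G : Type*} [Semiring k] [NoZeroDivisors k] [Add G]
    {f g : AddMonoidAlgebra k G}
    (h : (f.coeff.support ×ˢ g.coeff.support : Set (G × G)).InjOn fun x => x.1 + x.2) :
    #(f * g).coeff.support = #f.coeff.support * #g.coeff.support := by
  classical
  suffices (f * g).coeff.support = f.coeff.support + g.coeff.support by
    rw [this]
    exact card_image₂_iff.2 h
  refine (support_coeff_mul_subset f g).antisymm ?_
  rintro _ hc
  obtain ⟨a, ha, b, hb, rfl⟩ := mem_add.1 hc
  have hunique : UniqueAdd f.coeff.support g.coeff.support a b :=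
    fun _ _ ha' hb' hab => Prod.ext_iff.1 (h (Set.mk_mem_prod ha' hb') (Set.mk_mem_prod ha hb) hab)
  rw [Finsupp.mem_support_iff, coeff_mul_add_of_uniqueAdd hunique]
  exact mul_ne_zero (Finsupp.mem_support_iff.1 ha) (Finsupp.mem_support_iff.1 hb)

theorem card_support_mapDomain {k G H : Type*} [Semiring k] {φ : G → H}
    (hφ : Function.Injective φ) (f : AddMonoidAlgebra k G) :
    #(mapDomain φ f).coeff.support = #f.coeff.support := by
  classical
  rw [coeff_mapDomain, Finsupp.mapDomain_support_of_injective hφ, card_image_of_injective _ hφ]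

theorem support_mapDomain_subset_range {k G H : Type*} [Semiring k] (φ : G → H)
    (f : AddMonoidAlgebra k G) : ((mapDomain φ f).coeff.support : Set H) ⊆ Set.range φ := by
  classical
  intro h hh
  rw [coeff_mapDomain] at hh
  obtain ⟨g, -, rfl⟩ := mem_image.1 (Finsupp.mapDomain_support hh)
  exact ⟨g, rfl⟩

end AddMonoidAlgebra

theorem Set.InjOn.injOn_add_of_subset {G : Type*} [AddCommGroup G] {H : AddSubgroup G}
    {s t : Set G} (hs : s.InjOn (QuotientAddGroup.mk' H)) (ht : t ⊆ H) :
    (s ×ˢ t).InjOn fun x => x.1 + x.2 := by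
  rintro ⟨a, b⟩ ⟨ha, hb⟩ ⟨a', b'⟩ ⟨ha', hb'⟩ (hab : a + b = a' + b')
  have hmod : (a : G ⧸ H) = a' := by
    rw [QuotientAddGroup.eq_iff_sub_mem]
    have : a - a' = b' - b := by rw [sub_eq_sub_iff_add_eq_add, hab, add_comm]
    exact this ▸ H.sub_mem (ht hb') (ht hb)
  obtain rfl := hs ha ha' hmod
  rw [add_right_inj] at hab
  rw [hab]

theorem Nat.sum_digits_two_two_mul (n : ℕ) : (digits 2 (2 * n)).sum = (digits 2 n).sum := by
  rcases n.eq_zero_or_pos with rfl | hn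
  · simp
  · rw [digits_def' one_lt_two (by omega)]
    simp

theorem Nat.sum_digits_two_two_mul_add_one (n : ℕ) :
    (digits 2 (2 * n + 1)).sum = (digits 2 n).sum + 1 := by
  rw [digits_def' one_lt_two (by omega)]
  simp only [mul_add_mod_self_left, mul_add_div two_pos, Nat.reduceDiv, add_zero, List.sum_cons]
  omega

open AddMonoidAlgebra in
theorem card_support_pow_of_injOn_quotient_two_nsmul {G : Type*} [AddCommGroup G]
    [IsAddTorsionFree G] {F : AddMonoidAlgebra (ZMod 2) G}
    (hF : (F.coeff.support : Set G).InjOn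
      (QuotientAddGroup.mk' (nsmulAddMonoidHom 2 : G →+ G).range)) (n : ℕ) :
    #(F ^ n).coeff.support = #F.coeff.support ^ (Nat.digits 2 n).sum := by
  have hsq (f : AddMonoidAlgebra (ZMod 2) G) : f ^ 2 = mapDomain (2 • ·) f :=
    pow_prime_eq_mapDomain_nsmul f
  induction n using Nat.evenOddRec with
  | h0 => simp
  | h_even m ih =>
    rw [pow_mul', hsq, card_support_mapDomain (nsmul_right_injective two_ne_zero), ih,
      Nat.sum_digits_two_two_mul]
  | h_odd m ih =>
    have hinj := hF.injOn_add_of_subset (support_mapDomain_subset_range (2 • ·) (F ^ m))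
    rw [pow_succ', pow_mul', hsq, card_support_mul_of_injOn hinj,
      card_support_mapDomain (nsmul_right_injective two_ne_zero), ih,
      Nat.sum_digits_two_two_mul_add_one, pow_succ, mul_comm]

theorem support_coeff_mon_add_mon_add_mon :
    (mon 1 0 + mon 0 (-1) + mon 1 (-1)).coeff.support = {(1, 0), (0, -1), (1, -1)} := by
  ext z
  simp only [mon, AddMonoidAlgebra.coeff_add, AddMonoidAlgebra.coeff_single,
    Finsupp.mem_support_iff, Finsupp.add_apply, Finsupp.single_apply, mem_insert, mem_singleton]
  split_ifs <;> simp_all [eq_comm]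

theorem injOn_mk_range_two_nsmul :
    (({(1, 0), (0, -1), (1, -1)} : Finset (ℤ × ℤ)) : Set (ℤ × ℤ)).InjOn
      (QuotientAddGroup.mk' (nsmulAddMonoidHom 2 : ℤ × ℤ →+ ℤ × ℤ).range) := by
  rintro ⟨a₁, a₂⟩ ha ⟨b₁, b₂⟩ hb hab
  obtain ⟨⟨u, v⟩, huv⟩ := QuotientAddGroup.eq_iff_sub_mem.1 hab
  simp only [nsmulAddMonoidHom_apply, Prod.smul_mk, Prod.mk_sub_mk, Prod.mk.injEq, nsmul_eq_mul,
    Nat.cast_ofNat] at huv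
  simp only [coe_insert, coe_singleton, Set.mem_insert_iff, Set.mem_singleton_iff,
    Prod.mk.injEq] at ha hb
  rw [Prod.mk.injEq]
  omega

/-- For `F = x + 1/y + x/y`, `|F^n| = 3^(s n)` where `s n` is the number of
1s in the binary expansion of `n`. -/
theorem oddRule013_all (n : ℕ) :
    ((mon 1 0 + mon 0 (-1) + mon 1 (-1)) ^ n).coeff.support.card = 3 ^ (Nat.digits 2 n).sum := by
  have hF := support_coeff_mon_add_mon_add_mon
  rw [card_support_pow_of_injOn_quotient_two_nsmul (hF ▸ injOn_mk_range_two_nsmul), hF]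
  rfl
end

section
/- For F = 1/(xy) + 1/y + x/y in GF(2)[x,x^{-1},y,y^{-1}] (Odd-rule 007, i.e., Wolfram Rule 150), the sequence b_n = |F^{2^n-1}| satisfies b_n = (2^{n+2} - (-1)^n)/3 for all n ≥ 0. -/
/-!
Write `N = 2 ^ n`. In characteristic 2 the Frobenius gives `F ^ N = y⁻ᴺ (x⁻ᴺ + 1 + xᴺ)`, so
`F ^ (2N - 1) = F ^ (N - 1) * y⁻ᴺ (x⁻ᴺ + 1 + xᴺ)`, and by induction on `n`
`F ^ (N - 1) = y¹⁻ᴺ ∑ xᵏ`, the sum running over the `k` with `|k| < N` and `3 ∤ N - |k|`: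
the three shifted copies of this set add up mod 2 to the set for `2N`, as `3 ∤ N`.
Passing from `N` to `N + 3` adds exactly the four exponents `±(N + 1), ±(N + 2)`, so the
set has `N + (N + 1) / 3` elements, which is `(4N - (-1)ⁿ) / 3` because `N ≡ (-1)ⁿ mod 3`.
-/

open Finset AddMonoidAlgebra

instance : CharP R2 2 := charP_of_injective_algebraMap' (ZMod 2) 2

noncomputable def rule150Support (N : ℕ) : Finset ℤ :=
  {k ∈ Ioo (-(N : ℤ)) N | ¬ 3 ∣ (N : ℤ) - |k|}

/-- Split by the sign of `k` rather than written with `|k|`, which `omega` cannot handle. -/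
lemma mem_rule150Support {N : ℕ} {k : ℤ} :
    k ∈ rule150Support N ↔
      (0 ≤ k ∧ k < N ∧ ¬ 3 ∣ (N : ℤ) - k) ∨ (k < 0 ∧ -k < N ∧ ¬ 3 ∣ (N : ℤ) + k) := by
  rw [rule150Support, mem_filter, mem_Ioo]
  rcases le_or_gt 0 k with hk | hk
  · rw [abs_of_nonneg hk]
    omega
  · rw [abs_of_neg hk, sub_neg_eq_add]
    omega

lemma card_rule150Support_add_three (N : ℕ) :
    #(rule150Support (N + 3)) = #(rule150Support N) + 4 := by
  have hsplit : rule150Support (N + 3) =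
      rule150Support N ∪ {-((N : ℤ) + 2), -((N : ℤ) + 1), (N : ℤ) + 1, (N : ℤ) + 2} := by
    ext k
    simp only [mem_union, mem_rule150Support, mem_insert, mem_singleton]
    push_cast
    omega
  have hdisj : Disjoint (rule150Support N)
      {-((N : ℤ) + 2), -((N : ℤ) + 1), (N : ℤ) + 1, (N : ℤ) + 2} := by
    rw [disjoint_left]
    intro k hk
    simp only [mem_rule150Support] at hk
    simp only [mem_insert, mem_singleton]
    omega
  rw [hsplit, card_union_of_disjoint hdisj, card_insert_of_notMem (by simp; omega),
    card_insert_of_notMem (by simp; omega), card_pair (by omega)]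

lemma card_rule150Support (N : ℕ) : #(rule150Support N) = N + (N + 1) / 3 := by
  induction N using Nat.strong_induction_on with
  | _ N ih =>
    match N with
    | 0 | 1 | 2 => decide
    | M + 3 =>
      rw [card_rule150Support_add_three, ih M (by omega)]
      omega

lemma rule150Support_two_mul {N : ℕ} (hN : ¬ 3 ∣ N) (k : ℤ) :
    ((if k + N ∈ rule150Support N then 1 else 0) + (if k ∈ rule150Support N then 1 else 0) +
      (if k - N ∈ rule150Support N then 1 else 0) : ZMod 2) =
      if k ∈ rule150Support (2 * N) then 1 else 0 := by
  -- `omega` alone does not find the contradictions without these residues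
  have hN' : (N : ℤ) % 3 = 1 ∨ (N : ℤ) % 3 = 2 := by omega
  have hk : k % 3 = 0 ∨ k % 3 = 1 ∨ k % 3 = 2 := by omega
  simp only [mem_rule150Support, Nat.cast_mul, Nat.cast_ofNat]
  split_ifs <;> first | decide | omega

lemma mon_pow (i j : ℤ) (m : ℕ) : mon i j ^ m = mon (m * i) (m * j) := by
  simp [mon, single_pow]

noncomputable def rule150 : R2 := mon (-1) (-1) + mon 0 (-1) + mon 1 (-1)

lemma rule150_pow_two_pow (n : ℕ) :
    rule150 ^ 2 ^ n = mon (-2 ^ n) (-2 ^ n) + mon 0 (-2 ^ n) + mon (2 ^ n) (-2 ^ n) := by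
  simp [rule150, add_pow_char_pow, mon_pow]

lemma coeff_mul_rule150_shift (p : R2) (N a b : ℤ) :
    (p * (mon (-N) (-N) + mon 0 (-N) + mon N (-N))).coeff (a, b) =
      p.coeff (a + N, b + N) + p.coeff (a, b + N) + p.coeff (a - N, b + N) := by
  simp [mon, mul_add, sub_eq_add_neg]

lemma coeff_rule150_pow (n : ℕ) (a b : ℤ) :
    (rule150 ^ (2 ^ n - 1)).coeff (a, b) =
      if b = 1 - 2 ^ n ∧ a ∈ rule150Support (2 ^ n) then 1 else 0 := by
  induction n generalizing a b with
  | zero =>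
    simp only [pow_zero, Nat.sub_self, one_def, coeff_single, Finsupp.single_apply,
      Prod.ext_iff, Prod.fst_zero, Prod.snd_zero, Nat.cast_one, mem_rule150Support]
    split_ifs <;> first | rfl | omega
  | succ n ih =>
    have hexp : 2 ^ (n + 1) - 1 = (2 ^ n - 1) + 2 ^ n := by
      have := Nat.one_le_two_pow (n := n)
      rw [pow_succ]
      omega
    rw [hexp, pow_add, rule150_pow_two_pow, coeff_mul_rule150_shift, ih, ih, ih]
    have hb : b + 2 ^ n = 1 - 2 ^ n ↔ b = 1 - 2 ^ (n + 1) := by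
      rw [pow_succ]
      omega
    simp only [hb]
    by_cases hb' : b = 1 - 2 ^ (n + 1)
    · have h3 : ¬ 3 ∣ 2 ^ n := fun h => by
        have := Nat.prime_three.dvd_of_dvd_pow h
        omega
      simp only [hb', true_and]
      simpa [pow_succ'] using rule150Support_two_mul h3 a
    · simp [hb']

lemma support_rule150_pow (n : ℕ) :
    (rule150 ^ (2 ^ n - 1)).coeff.support =
      (rule150Support (2 ^ n)).map (.sectL ℤ (1 - 2 ^ n)) := by
  ext ⟨a, b⟩
  simp [coeff_rule150_pow, and_comm, eq_comm]

/-- For `F = 1/(xy) + 1/y + x/y` (Odd-rule 007, Wolfram Rule 150), the sequence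
`b n = |F^(2^n - 1)|` satisfies `b n = (2^(n+2) - (-1)^n)/3` for all `n ≥ 0`. -/
theorem oddRule007_growth (n : ℕ) :
    (((mon (-1) (-1) + mon 0 (-1) + mon 1 (-1)) ^ (2 ^ n - 1)).coeff.support.card : ℤ)
      = (2 ^ (n + 2) - (-1) ^ n) / 3 := by
  change (#(rule150 ^ (2 ^ n - 1)).coeff.support : ℤ) = _
  rw [support_rule150_pow, card_map, card_rule150Support]
  have hdvd : (3 : ℤ) ∣ 2 ^ n - (-1) ^ n := by
    simpa using sub_dvd_pow_sub_pow (2 : ℤ) (-1) n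
  push_cast
  rw [pow_add]
  rcases neg_one_pow_eq_or ℤ n with h | h <;> rw [h] at hdvd ⊢ <;> omega
end

section
/- If a sequence a_n is the run length transform of b_n with b_0 = 1, and b satisfies b_{n+1} = 7 b_n - 12 b_{n-1} for n ≥ 1, then a satisfies: a_{2t} = a_t for t ≥ 1, a_{4t+1} = b_1 · a_t for t ≥ 0, and a_{4t+3} = 7 a_{2t+1} - 12 a_t for t ≥ 1. -/
/-- Collect the lengths of maximal runs of `true` in a list of bits;
`acc` is the length of the current run in progress. -/
def runsAux : ℕ → List Bool → List ℕ
  | acc, [] => if acc = 0 then [] else [acc]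
  | acc, (true :: bs) => runsAux (acc + 1) bs
  | acc, (false :: bs) => if acc = 0 then runsAux 0 bs else acc :: runsAux 0 bs

/-- The lengths of the maximal runs of 1s in the binary expansion of `n`. -/
def runLengths (n : ℕ) : List ℕ := runsAux 0 n.bits

/-- The run length transform of a sequence `S`: `T n = ∏_{i ∈ L(n)} S i`. -/
def RLT (S : ℕ → ℤ) (n : ℕ) : ℤ := ((runLengths n).map S).prod

lemma runsAux_key (b : ℕ → ℤ) (hb0 : b 0 = 1)
    (hrec : ∀ n : ℕ, 1 ≤ n → b (n + 1) = 7 * b n - 12 * b (n - 1)) :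
    ∀ (bs : List Bool) (acc : ℕ), 1 ≤ acc →
      ((runsAux (acc + 1) bs).map b).prod =
        7 * ((runsAux acc bs).map b).prod - 12 * ((runsAux (acc - 1) bs).map b).prod := by
  intro bs
  induction bs with
  | nil =>
    intro acc hacc
    simp only [runsAux]
    rcases Nat.exists_eq_add_of_le hacc with ⟨k, rfl⟩
    rcases k with _ | k
    · simp [hrec 1 le_rfl, hb0]
    · have h : ¬ (1 + (k+1) = 0) := by omega
      have h2 : 1 + (k+1) - 1 = k + 1 := by omega
      simp only [if_neg h, h2, if_neg (Nat.succ_ne_zero k), if_neg (by omega : ¬ 1 + (k+1) + 1 = 0)]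
      have := hrec (1 + (k+1)) (by omega)
      simp only [List.map_cons, List.map_nil, List.prod_cons, List.prod_nil, mul_one]
      rw [this, h2]
  | cons hd bs ih =>
    intro acc hacc
    cases hd with
    | true =>
      simp only [runsAux]
      have h1 : acc - 1 + 1 = acc := by omega
      rw [h1]
      exact ih (acc + 1) (by omega)
    | false =>
      simp only [runsAux]
      rcases Nat.exists_eq_add_of_le hacc with ⟨k, rfl⟩
      rcases k with _ | k
      · simp only [if_neg (one_ne_zero), if_neg (by omega : ¬ (1:ℕ) + 1 = 0),
          Nat.add_sub_cancel, if_pos rfl, List.map_cons, List.prod_cons]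
        rw [hrec 1 le_rfl]
        simp [hb0]; ring
      · have h2 : 1 + (k+1) - 1 = k + 1 := by omega
        simp only [if_neg (by omega : ¬ 1 + (k+1) + 1 = 0), if_neg (by omega : ¬ 1 + (k+1) = 0),
          h2, if_neg (Nat.succ_ne_zero k), List.map_cons, List.prod_cons]
        rw [hrec (1 + (k+1)) (by omega), h2]
        ring

/-- If `a` is the run length transform of `b`, `b 0 = 1`, and `b` satisfies
`b (n+1) = 7 b n − 12 b (n−1)` for `n ≥ 1`, then `a (2t) = a t` for `t ≥ 1`,
`a (4t+1) = b 1 · a t` for `t ≥ 0`, and `a (4t+3) = 7 a (2t+1) − 12 a t` for `t ≥ 1`. -/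
theorem rlt_of_recurrence (a b : ℕ → ℤ)
    (ha : ∀ n, a n = RLT b n) (hb0 : b 0 = 1)
    (hrec : ∀ n : ℕ, 1 ≤ n → b (n + 1) = 7 * b n - 12 * b (n - 1)) :
    (∀ t : ℕ, 1 ≤ t → a (2 * t) = a t)
    ∧ (∀ t : ℕ, a (4 * t + 1) = b 1 * a t)
    ∧ (∀ t : ℕ, 1 ≤ t → a (4 * t + 3) = 7 * a (2 * t + 1) - 12 * a t) := by
  have key := runsAux_key b hb0 hrec
  have hbits1 : ∀ t : ℕ, (2 * t + 1).bits = true :: t.bits := Nat.bit1_bits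
  refine ⟨?_, ?_, ?_⟩
  · intro t ht
    rw [ha, ha, RLT, RLT, runLengths, runLengths, Nat.bit0_bits t (by omega)]
    simp [runsAux]
  · intro t
    rw [ha, ha, RLT, RLT, runLengths, runLengths]
    rcases Nat.eq_zero_or_pos t with rfl | ht
    · norm_num [show (1:ℕ).bits = [true] from Nat.one_bits, runsAux]
    · have : 4 * t + 1 = 2 * (2 * t) + 1 := by ring
      rw [this, hbits1, Nat.bit0_bits t (by omega)]
      simp [runsAux]
  · intro t _
    have h3 : 4 * t + 3 = 2 * (2 * t + 1) + 1 := by ring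
    rw [ha, ha, ha, RLT, RLT, RLT, runLengths, runLengths, runLengths,
      h3, hbits1, hbits1]
    simp only [runsAux]
    exact key t.bits 1 le_rfl
end

section
/- The neighborhoods F = 1 + x + 1/y + x/y (Odd-rule 033) and G = y/x + xy + 1/(xy) + x/y (Odd-rule 505) are combinatorially equivalent: |F^n| = |G^n| for all n ≥ 0. -/
open Function

namespace AddMonoidAlgebra

variable {k M N : Type*}

theorem card_support_coeff_mapDomain [Semiring k] {f : M → N} (hf : Injective f) (p : k[M]) :
    (mapDomain f p).coeff.support.card = p.coeff.support.card := by
  classical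
  rw [coeff_mapDomain, Finsupp.mapDomain_support_of_injective hf,
    Finset.card_image_of_injective _ hf]

theorem card_support_coeff_single_one_mul [Semiring k] [Add M] [IsLeftCancelAdd M] (a : M)
    (p : k[M]) : (single a 1 * p).coeff.support.card = p.coeff.support.card := by
  rw [support_coeff_single_mul p 1 (by simp) a, Finset.card_map]

theorem card_support_coeff_pow_single_one_mul_mapDomain [CommSemiring k] [AddMonoid M]
    [AddCommMonoid N] [IsLeftCancelAdd N] {f : M →+ N} (hf : Injective f) (a : N) (p : k[M])
    (n : ℕ) :
    ((single a 1 * mapDomainRingHom k f p) ^ n).coeff.support.card =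
      (p ^ n).coeff.support.card := by
  rw [mul_pow, single_pow, one_pow, ← map_pow, card_support_coeff_single_one_mul]
  exact card_support_coeff_mapDomain hf _

end AddMonoidAlgebra

/-- The neighborhoods `F = 1 + x + 1/y + x/y` (Odd-rule 033) and
`G = y/x + xy + 1/(xy) + x/y` (Odd-rule 505) are combinatorially equivalent:
`|F^n| = |G^n|` for all `n ≥ 0`. -/
theorem oddRule033_equiv_505 (n : ℕ) :
    ((mon 0 0 + mon 1 0 + mon 0 (-1) + mon 1 (-1)) ^ n).coeff.support.card
      = ((mon (-1) 1 + mon 1 1 + mon (-1) (-1) + mon 1 (-1)) ^ n).coeff.support.card := by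
  have hG : mon (-1) 1 + mon 1 1 + mon (-1) (-1) + mon 1 (-1) =
      AddMonoidAlgebra.single (-1, 1) 1 *
        AddMonoidAlgebra.mapDomainRingHom (ZMod 2) (2 • .id (ℤ × ℤ))
          (mon 0 0 + mon 1 0 + mon 0 (-1) + mon 1 (-1)) := by
    simp only [mon, map_add, AddMonoidAlgebra.mapDomainRingHom_apply,
      AddMonoidAlgebra.mapDomain_single, mul_add, AddMonoidAlgebra.single_mul_single]
    norm_num
  rw [hG, AddMonoidAlgebra.card_support_coeff_pow_single_one_mul_mapDomain
    (nsmul_right_injective two_ne_zero)]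
end

section
/- For the full 3×3 neighborhood F = (1/x + 1 + x)(1/y + 1 + y) (Odd-rule 777), b_n = |F^{2^n-1}| = c_n², where c_n = (2^{n+2} - (-1)^n)/3; i.e., b_n is the square of the Jacobsthal-type sequence. -/
/-!
Both factors of `F` are images of the Laurent trinomial `p = x⁻¹ + 1 + x` over `GF(2)`, one
in `x` and one in `y`, so the support of `F ^ m` is the product of two copies of the support
of `p ^ m`. For `m = 2 ^ n - 1` that support is `{s : |s| ≤ m, m - |s| ≢ 2 (mod 3)}`: by
Frobenius `p ^ (2 ^ n) = x^(-2^n) + 1 + x^(2^n)`, so `p ^ (2m + 1) = p ^ m · p ^ (m + 1)` is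
the sum of three translates of `p ^ m`, and the description is checked to be stable under this
step. Counting residues mod 3 gives `(2 ^ (n + 2) - (-1) ^ n) / 3` points.
-/

open LaurentPolynomial Finset

section Product

variable {R G H : Type*} [Semiring R] [AddMonoid G] [AddMonoid H]

theorem AddMonoidAlgebra.coeff_mapDomain_inl_mul_inr (f : AddMonoidAlgebra R G)
    (g : AddMonoidAlgebra R H) (a : G) (b : H) :
    (mapDomainRingHom R (AddMonoidHom.inl G H) f *
      mapDomainRingHom R (AddMonoidHom.inr G H) g).coeff (a, b) = f.coeff a * g.coeff b := by
  classical
  induction f using AddMonoidAlgebra.induction_linear with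
  | zero => simp
  | add f₁ f₂ h₁ h₂ => rw [map_add, add_mul, coeff_add, Finsupp.add_apply, h₁, h₂, coeff_add,
      Finsupp.add_apply, add_mul]
  | single a' r =>
    induction g using AddMonoidAlgebra.induction_linear with
    | zero => simp
    | add g₁ g₂ h₁ h₂ => rw [map_add, mul_add, coeff_add, Finsupp.add_apply, h₁, h₂, coeff_add,
        Finsupp.add_apply, mul_add]
    | single b' r' =>
      simp only [mapDomainRingHom_apply, mapDomain_single, single_mul_single, coeff_single,
        AddMonoidHom.inl_apply, AddMonoidHom.inr_apply, Prod.mk_add_mk, add_zero, zero_add,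
        Finsupp.single_apply, Prod.mk.injEq]
      split_ifs <;> simp_all

theorem AddMonoidAlgebra.support_mapDomain_inl_mul_inr [NoZeroDivisors R]
    (f : AddMonoidAlgebra R G) (g : AddMonoidAlgebra R H) :
    (mapDomainRingHom R (AddMonoidHom.inl G H) f *
      mapDomainRingHom R (AddMonoidHom.inr G H) g).coeff.support
      = f.coeff.support ×ˢ g.coeff.support := by
  ext ⟨a, b⟩
  simp only [Finsupp.mem_support_iff, mem_product, coeff_mapDomain_inl_mul_inr, ne_eq,
    mul_eq_zero, not_or]

end Product

instance : CharP (ZMod 2)[T;T⁻¹] 2 := charP_of_injective_algebraMap' (ZMod 2) 2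

theorem LaurentPolynomial.coeff_mul_T {R : Type*} [Semiring R] (f : R[T;T⁻¹]) (c j : ℤ) :
    (f * T c).coeff j = f.coeff (j - c) := by
  rw [T, AddMonoidAlgebra.coeff_mul_single_apply, mul_one, sub_eq_add_neg]

noncomputable def trinomial : (ZMod 2)[T;T⁻¹] := T (-1) + T 0 + T 1

theorem trinomial_pow_two_pow (n : ℕ) : trinomial ^ 2 ^ n = T (-2 ^ n) + T 0 + T (2 ^ n) := by
  simp only [trinomial, add_pow_char_pow, T_pow]
  push_cast
  ring_nf

noncomputable def trinomialSupport (m : ℕ) : Finset ℤ :=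
  (Icc (-(m : ℤ)) m).filter fun s => (m - |s|) % 3 ≠ 2

theorem mem_trinomialSupport {m : ℕ} {s : ℤ} :
    s ∈ trinomialSupport m ↔ |s| ≤ m ∧ (m - |s|) % 3 ≠ 2 := by
  simp only [trinomialSupport, mem_filter, mem_Icc, abs_le]

theorem trinomialSupport_step {m : ℕ} (hm : m % 3 ≠ 2) (j : ℤ) :
    ((if j + (m + 1) ∈ trinomialSupport m then 1 else 0) +
      (if j ∈ trinomialSupport m then 1 else 0) +
      (if j - (m + 1) ∈ trinomialSupport m then 1 else 0) : ZMod 2)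
      = if j ∈ trinomialSupport (2 * m + 1) then 1 else 0 := by
  have := abs_cases j
  have := abs_cases (j + (m + 1))
  have := abs_cases (j - (m + 1))
  -- without the residues spelled out, `omega` misses some of the contradictions
  have : m % 3 = 0 ∨ m % 3 = 1 := by omega
  have : j % 3 = 0 ∨ j % 3 = 1 ∨ j % 3 = 2 := by omega
  simp only [mem_trinomialSupport]
  push_cast
  split_ifs <;> first | decide | omega

theorem coeff_trinomial_pow (n : ℕ) (j : ℤ) :
    (trinomial ^ (2 ^ n - 1)).coeff j = if j ∈ trinomialSupport (2 ^ n - 1) then 1 else 0 := by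
  induction n generalizing j with
  | zero =>
    rw [pow_zero, Nat.sub_self, pow_zero, AddMonoidAlgebra.one_def, AddMonoidAlgebra.coeff_single,
      Finsupp.single_apply]
    refine if_congr ?_ rfl rfl
    have := abs_cases j
    rw [mem_trinomialSupport, Nat.cast_zero]
    omega
  | succ n ih =>
    obtain ⟨m, hm⟩ : ∃ m, 2 ^ n = m + 1 := ⟨2 ^ n - 1, by have := n.one_le_two_pow; omega⟩
    have hm3 : m % 3 ≠ 2 := by
      have : ¬ 3 ∣ 2 ^ n := fun h => by simpa using Nat.prime_three.dvd_of_dvd_pow h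
      omega
    have hmZ : (2 : ℤ) ^ n = m + 1 := by exact_mod_cast hm
    rw [hm, Nat.add_sub_cancel] at ih
    rw [show 2 ^ (n + 1) - 1 = 2 * m + 1 by rw [pow_succ]; omega, ← trinomialSupport_step hm3,
      show 2 * m + 1 = m + 2 ^ n by omega, pow_add, trinomial_pow_two_pow]
    simp only [mul_add, AddMonoidAlgebra.coeff_add, Finsupp.add_apply, coeff_mul_T, ih, hmZ,
      sub_neg_eq_add, sub_zero]

theorem support_trinomial_pow (n : ℕ) :
    (trinomial ^ (2 ^ n - 1)).coeff.support = trinomialSupport (2 ^ n - 1) := by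
  ext j
  simp [coeff_trinomial_pow]

theorem card_filter_range_mod_three_ne_two (t : ℕ) :
    ((range t).filter (· % 3 ≠ 2)).card = t - t / 3 := by
  induction t with
  | zero => rfl
  | succ t ih =>
    rw [range_add_one, filter_insert]
    split_ifs
    · rw [card_insert_of_notMem (by simp), ih]; omega
    · rw [ih]; omega

theorem card_trinomialSupport (m : ℕ) :
    (trinomialSupport m).card = (m - m / 3) + (m + 1 - (m + 1) / 3) := by
  have hsplit : trinomialSupport m
      = ((range m).filter (· % 3 ≠ 2)).image (fun k : ℕ => (k : ℤ) - m)
        ∪ ((range (m + 1)).filter (· % 3 ≠ 2)).image (fun k : ℕ => (m : ℤ) - k) := by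
    ext s
    have := abs_cases s
    simp only [mem_trinomialSupport, mem_union, mem_image, mem_filter, mem_range]
    constructor
    · intro hs
      rcases lt_or_ge s 0 with h | h
      · exact Or.inl ⟨(s + m).toNat, by omega⟩
      · exact Or.inr ⟨(m - s).toNat, by omega⟩
    · rintro (⟨k, hk, rfl⟩ | ⟨k, hk, rfl⟩) <;> omega
  have hdisj : Disjoint (((range m).filter (· % 3 ≠ 2)).image (fun k : ℕ => (k : ℤ) - m))
      (((range (m + 1)).filter (· % 3 ≠ 2)).image (fun k : ℕ => (m : ℤ) - k)) := by
    simp only [disjoint_left, mem_image, mem_filter, mem_range]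
    rintro _ ⟨a, ha, rfl⟩ ⟨b, hb, h⟩
    omega
  rw [hsplit, card_union_of_disjoint hdisj,
    card_image_of_injective _ (fun a b h => by simpa using h),
    card_image_of_injective _ (fun a b h => by simpa using h),
    card_filter_range_mod_three_ne_two, card_filter_range_mod_three_ne_two]

theorem three_mul_card_trinomialSupport (n : ℕ) :
    3 * ((trinomialSupport (2 ^ n - 1)).card : ℤ) = 2 ^ (n + 2) - (-1) ^ n := by
  have hmod : (2 : ℤ) ^ n % 3 = (-1) ^ n % 3 := Int.ModEq.pow n (by decide)
  have hsign := neg_one_pow_eq_or ℤ n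
  have hpos := n.one_le_two_pow
  rw [card_trinomialSupport, Nat.sub_add_cancel hpos, pow_add]
  rw [← Nat.cast_two (R := ℤ), ← Nat.cast_pow] at hmod ⊢
  generalize 2 ^ n = N at *
  generalize (-1 : ℤ) ^ n = e at *
  omega

theorem mon_eq_mapDomain_inl (i : ℤ) :
    mon i 0 = AddMonoidAlgebra.mapDomainRingHom (ZMod 2) (AddMonoidHom.inl ℤ ℤ) (T i) := by
  rw [mon, T, AddMonoidAlgebra.mapDomainRingHom_apply, AddMonoidAlgebra.mapDomain_single]
  rfl

theorem mon_eq_mapDomain_inr (j : ℤ) :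
    mon 0 j = AddMonoidAlgebra.mapDomainRingHom (ZMod 2) (AddMonoidHom.inr ℤ ℤ) (T j) := by
  rw [mon, T, AddMonoidAlgebra.mapDomainRingHom_apply, AddMonoidAlgebra.mapDomain_single]
  rfl

/-- For the full 3×3 neighborhood `F = (1/x + 1 + x)(1/y + 1 + y)`
(Odd-rule 777), `b n = |F^(2^n − 1)|` is the square of the Jacobsthal-type
number `c n = (2^(n+2) − (−1)^n)/3`. -/
theorem oddRule777_growth (n : ℕ) :
    ((((mon (-1) 0 + mon 0 0 + mon 1 0) * (mon 0 (-1) + mon 0 0 + mon 0 1))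
        ^ (2 ^ n - 1)).coeff.support.card : ℤ)
      = (((2 : ℤ) ^ (n + 2) - (-1) ^ n) / 3) ^ 2 := by
  have hx : mon (-1) 0 + mon 0 0 + mon 1 0
      = AddMonoidAlgebra.mapDomainRingHom (ZMod 2) (AddMonoidHom.inl ℤ ℤ) trinomial := by
    simp only [trinomial, map_add, mon_eq_mapDomain_inl]
  have hy : mon 0 (-1) + mon 0 0 + mon 0 1
      = AddMonoidAlgebra.mapDomainRingHom (ZMod 2) (AddMonoidHom.inr ℤ ℤ) trinomial := by
    simp only [trinomial, map_add, mon_eq_mapDomain_inr]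
  rw [hx, hy, mul_pow, ← map_pow, ← map_pow, AddMonoidAlgebra.support_mapDomain_inl_mul_inr,
    card_product, support_trinomial_pow, ← three_mul_card_trinomialSupport,
    Int.mul_ediv_cancel_left _ three_ne_zero]
  push_cast
  ring
end
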